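/- Let ν ≥ 0 be an integer, Π_ν > 0, a_ν > a' > 0 with (a_ν - a')C_J < σ for some σ, C_J > 0, and let j be an integer with |j| > Π_ν. Then for all k ∈ ℤⁿ with max_b |j_b| ≤ C_J, the momentum π(k,-2j) = ∑_b k_b j_b - 2j satisfies |π(k,-2j)| ≥ 2Π_ν - C_J|k| ≥ 2Π_ν - σ|k|/(a_ν - a'), and consequently for any coefficients (R̂_k): ∑_k |R̂_k| e^{|k|(s-σ)} e^{a'|π(k,-2j)|} ≤ e^{-2(a_ν - a')Π_ν} ∑_k |R̂_k| e^{|k|s} e^{a_ν |π(k,-2j)|}. -/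

import Mathlib

/-!
Since `|j_b| ≤ C_J`, the momentum `π(k,-2j) = ∑_b k_b j_b - 2j` deviates from `-2j` by at most
`C_J |k|`, so `|π| ≥ 2Π_ν - C_J|k|`. Writing `e^{a'|π|} = e^{a_ν|π|} e^{-(a_ν-a')|π|}`, the lower
bound turns the second factor into `e^{-2(a_ν-a')Π_ν} e^{(a_ν-a')C_J|k|}`, and the leftover
`e^{(a_ν-a')C_J|k|} ≤ e^{σ|k|}` is paid for by lowering `s` to `s - σ`. Summing over `k` gives the
estimate.
-/

open Real

lemma abs_sum_mul_le_mul_sum_abs {ι : Type*} (t : Finset ι) (x y : ι → ℝ) {C : ℝ}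
    (hy : ∀ i ∈ t, |y i| ≤ C) : |∑ i ∈ t, x i * y i| ≤ C * ∑ i ∈ t, |x i| := by
  rw [Finset.mul_sum]
  refine (Finset.abs_sum_le_sum_abs _ _).trans (Finset.sum_le_sum fun i hi => ?_)
  rw [abs_mul, mul_comm]
  exact mul_le_mul_of_nonneg_right (hy i hi) (abs_nonneg _)

lemma two_mul_sub_le_abs_sub_two_mul {p q r P : ℝ} (hq : P < |q|) (hp : |p| ≤ r) :
    2 * P - r ≤ |p - 2 * q| := by
  have h := abs_sub_abs_le_abs_sub (2 * q) p
  rw [abs_sub_comm, abs_mul, abs_two] at h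
  linarith

lemma mul_le_div_of_mul_le {K C σ d : ℝ} (hK : 0 ≤ K) (hd : 0 < d) (hgap : d * C ≤ σ) :
    C * K ≤ σ * K / d := by
  rw [le_div_iff₀ hd]
  nlinarith

lemma mul_exp_mul_exp_le {r K p s σ a a' C P : ℝ} (hr : 0 ≤ r) (hK : 0 ≤ K) (haa : a' < a)
    (hgap : (a - a') * C ≤ σ) (hp : 2 * P - C * K ≤ p) :
    r * exp (K * (s - σ)) * exp (a' * p) ≤
      exp (-(2 * (a - a') * P)) * (r * exp (K * s) * exp (a * p)) := by
  have hexp : K * (s - σ) + a' * p ≤ -(2 * (a - a') * P) + (K * s + a * p) := by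
    nlinarith [mul_le_mul_of_nonneg_left hp (sub_pos.mpr haa).le]
  calc r * exp (K * (s - σ)) * exp (a' * p) = r * exp (K * (s - σ) + a' * p) := by
        rw [mul_assoc, ← exp_add]
    _ ≤ r * exp (-(2 * (a - a') * P) + (K * s + a * p)) := by gcongr
    _ = exp (-(2 * (a - a') * P)) * (r * exp (K * s) * exp (a * p)) := by
        rw [exp_add, exp_add]; ring

lemma tsum_le_mul_tsum_of_le {ι : Type*} {f g : ι → ℝ} {c : ℝ} (hf : ∀ i, 0 ≤ f i)
    (hfg : ∀ i, f i ≤ c * g i) (hg : Summable g) : ∑' i, f i ≤ c * ∑' i, g i := by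
  rw [← tsum_mul_left]
  have hcg := hg.mul_left c
  exact (hcg.of_nonneg_of_le hf hfg).tsum_le_tsum hfg hcg

theorem stmt_15_general (n : ℕ) (s σ a a' CJ Pv : ℝ)
    (haa : a' < a)
    (hgap : (a - a') * CJ < σ)
    (j : ℤ) (hj : Pv < |(j : ℝ)|) (jb : Fin n → ℤ) (hjb : ∀ b, (|jb b| : ℝ) ≤ CJ)
    (R : (Fin n → ℤ) → ℂ)
    (hR : Summable fun k : Fin n → ℤ =>
      ‖R k‖ * Real.exp ((∑ b, |(k b : ℝ)|) * s) *
        Real.exp (a * |∑ b, (k b : ℝ) * (jb b : ℝ) - 2 * (j : ℝ)|)) :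
    (∀ k : Fin n → ℤ,
        2 * Pv - CJ * (∑ b, |(k b : ℝ)|) ≤
            |∑ b, (k b : ℝ) * (jb b : ℝ) - 2 * (j : ℝ)| ∧
          2 * Pv - σ * (∑ b, |(k b : ℝ)|) / (a - a') ≤
            2 * Pv - CJ * (∑ b, |(k b : ℝ)|)) ∧
      ∑' k : Fin n → ℤ,
          ‖R k‖ * Real.exp ((∑ b, |(k b : ℝ)|) * (s - σ)) *
            Real.exp (a' * |∑ b, (k b : ℝ) * (jb b : ℝ) - 2 * (j : ℝ)|) ≤
        Real.exp (-(2 * (a - a') * Pv)) *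
          ∑' k : Fin n → ℤ,
            ‖R k‖ * Real.exp ((∑ b, |(k b : ℝ)|) * s) *
              Real.exp (a * |∑ b, (k b : ℝ) * (jb b : ℝ) - 2 * (j : ℝ)|) := by
  have hK (k : Fin n → ℤ) : 0 ≤ ∑ b, |(k b : ℝ)| := by positivity
  have hπ (k : Fin n → ℤ) :
      2 * Pv - CJ * ∑ b, |(k b : ℝ)| ≤ |∑ b, (k b : ℝ) * (jb b : ℝ) - 2 * (j : ℝ)| :=
    two_mul_sub_le_abs_sub_two_mul hj
      (abs_sum_mul_le_mul_sum_abs _ _ _ fun b _ => by exact_mod_cast hjb b)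
  refine ⟨fun k => ⟨hπ k, ?_⟩, ?_⟩
  · exact sub_le_sub_left (mul_le_div_of_mul_le (hK k) (sub_pos.mpr haa) hgap.le) _
  · refine tsum_le_mul_tsum_of_le (fun k => by positivity) (fun k => ?_) hR
    exact mul_exp_mul_exp_le (norm_nonneg _) (hK k) haa hgap.le (hπ k)

/-- Higher-momentum decay estimate (17.10.11.2): if `|j| > Pv`, `|j_b| ≤ C_J`,
`0 < a' < a` and `(a - a')C_J < σ`, then `|π(k,-2j)| ≥ 2Pv - C_J|k| ≥ 2Pv - σ|k|/(a-a')`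
and consequently
`∑_k |R̂_k| e^{|k|(s-σ)} e^{a'|π(k,-2j)|} ≤ e^{-2(a-a')Pv} ∑_k |R̂_k| e^{|k|s} e^{a|π(k,-2j)|}`. -/
theorem stmt_15 (n : ℕ) (s σ a a' CJ Pv : ℝ)
    (hσ : 0 < σ) (hσs : σ < s) (ha' : 0 < a') (haa : a' < a)
    (hCJ : 0 < CJ) (hgap : (a - a') * CJ < σ) (hPv : 0 < Pv)
    (j : ℤ) (hj : Pv < |(j : ℝ)|) (jb : Fin n → ℤ) (hjb : ∀ b, (|jb b| : ℝ) ≤ CJ)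
    (R : (Fin n → ℤ) → ℂ)
    (hR : Summable fun k : Fin n → ℤ =>
      ‖R k‖ * Real.exp ((∑ b, |(k b : ℝ)|) * s) *
        Real.exp (a * |∑ b, (k b : ℝ) * (jb b : ℝ) - 2 * (j : ℝ)|)) :
    (∀ k : Fin n → ℤ,
        2 * Pv - CJ * (∑ b, |(k b : ℝ)|) ≤
            |∑ b, (k b : ℝ) * (jb b : ℝ) - 2 * (j : ℝ)| ∧
          2 * Pv - σ * (∑ b, |(k b : ℝ)|) / (a - a') ≤
            2 * Pv - CJ * (∑ b, |(k b : ℝ)|)) ∧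
      ∑' k : Fin n → ℤ,
          ‖R k‖ * Real.exp ((∑ b, |(k b : ℝ)|) * (s - σ)) *
            Real.exp (a' * |∑ b, (k b : ℝ) * (jb b : ℝ) - 2 * (j : ℝ)|) ≤
        Real.exp (-(2 * (a - a') * Pv)) *
          ∑' k : Fin n → ℤ,
            ‖R k‖ * Real.exp ((∑ b, |(k b : ℝ)|) * s) *
              Real.exp (a * |∑ b, (k b : ℝ) * (jb b : ℝ) - 2 * (j : ℝ)|) :=
  stmt_15_general n s σ a a' CJ Pv haa hgap j hj jb hjb R hR
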